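/- arXiv:math/0109178 — 4 statements merged into one kernel-verified Lean document; each statement's English description precedes it below -/
import Mathlib

section
/- Let F(x,y) be a smooth positive function on U × (ℝⁿ \ {0}) (U ⊆ ℝⁿ open), positively homogeneous of degree one in y, satisfying the Rapcsák equation F_{x^k y^l} y^k = F_{x^l} for all l. Then F also satisfies the Hamel equation F_{x^k y^l} = F_{x^l y^k} for all k, l. -/
/-- Partial derivative of `F(x,y)` in the direction `x^k`. -/
noncomputable def pdx {n : ℕ} (F : (Fin n → ℝ) → (Fin n → ℝ) → ℝ) (k : Fin n)
    (x y : Fin n → ℝ) : ℝ := fderiv ℝ (fun x' => F x' y) x (Pi.single k 1)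

/-- Partial derivative of `F(x,y)` in the direction `y^k`. -/
noncomputable def pdy {n : ℕ} (F : (Fin n → ℝ) → (Fin n → ℝ) → ℝ) (k : Fin n)
    (x y : Fin n → ℝ) : ℝ := fderiv ℝ (fun y' => F x y') y (Pi.single k 1)

/-- Rapcsák's equation implies Hamel's equation. -/
theorem stmt_0 (n : ℕ) (U : Set (Fin n → ℝ)) (hU : IsOpen U)
    (F : (Fin n → ℝ) → (Fin n → ℝ) → ℝ)
    (hsmooth : ContDiffOn ℝ (⊤ : ℕ∞) (fun p : (Fin n → ℝ) × (Fin n → ℝ) => F p.1 p.2)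
      (U ×ˢ {y : Fin n → ℝ | y ≠ 0}))
    (hpos : ∀ x ∈ U, ∀ y : Fin n → ℝ, y ≠ 0 → 0 < F x y)
    (hhom : ∀ x ∈ U, ∀ y : Fin n → ℝ, y ≠ 0 → ∀ c : ℝ, 0 < c → F x (c • y) = c * F x y)
    (hRap : ∀ x ∈ U, ∀ y : Fin n → ℝ, y ≠ 0 → ∀ l : Fin n,
      ∑ k, pdy (pdx F k) l x y * y k = pdx F l x y) :
    ∀ x ∈ U, ∀ y : Fin n → ℝ, y ≠ 0 → ∀ k l : Fin n,
      pdy (pdx F k) l x y = pdy (pdx F l) k x y := by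
  intro x hx y hy k l
  classical
  set G : ((Fin n → ℝ) × (Fin n → ℝ)) → ℝ := fun p => F p.1 p.2 with hGdef
  have hΩ : IsOpen (U ×ˢ {y : Fin n → ℝ | y ≠ 0}) := hU.prod isOpen_ne
  have hGat : ∀ p ∈ U ×ˢ {y : Fin n → ℝ | y ≠ 0}, ContDiffAt ℝ (⊤ : ℕ∞) G p :=
    fun p hp => hsmooth.contDiffAt (hΩ.mem_nhds hp)
  -- Lemma A : pdx in terms of full derivative
  have hpdx : ∀ (y' : Fin n → ℝ), y' ≠ 0 → ∀ i : Fin n,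
      pdx F i x y' = fderiv ℝ G (x, y') (Pi.single i 1, 0) := by
    intro y' hy' i
    have hmem : (x, y') ∈ U ×ˢ {y : Fin n → ℝ | y ≠ 0} := ⟨hx, hy'⟩
    have hGd : HasFDerivAt G (fderiv ℝ G (x, y')) (x, y') :=
      ((hGat _ hmem).differentiableAt (by simp)).hasFDerivAt
    have hj : HasFDerivAt (fun x' : Fin n → ℝ => (x', y'))
        ((ContinuousLinearMap.id ℝ (Fin n → ℝ)).prod 0) x :=
      (hasFDerivAt_id x).prodMk (hasFDerivAt_const y' x)
    have hcomp := hGd.comp x hj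
    have : fderiv ℝ (fun x' => F x' y') x
        = (fderiv ℝ G (x, y')).comp ((ContinuousLinearMap.id ℝ (Fin n → ℝ)).prod 0) :=
      hcomp.fderiv
    simp only [pdx, this]
    rfl
  -- fixed x slice functions
  set φ : Fin n → (Fin n → ℝ) → ℝ := fun i y' => pdx F i x y' with hφdef
  have hφsm : ∀ (y' : Fin n → ℝ), y' ≠ 0 → ∀ i, ContDiffAt ℝ (⊤ : ℕ∞) (φ i) y' := by
    intro y' hy' i
    have hmem : (x, y') ∈ U ×ˢ {y : Fin n → ℝ | y ≠ 0} := ⟨hx, hy'⟩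
    have h1 : ContDiffAt ℝ (⊤ : ℕ∞) (fderiv ℝ G) (x, y') :=
      (hGat _ hmem).fderiv_right (by simp)
    have hj : ContDiff ℝ (⊤ : ℕ∞) (fun y'' : Fin n → ℝ => ((x, y'') : (Fin n → ℝ) × (Fin n → ℝ))) :=
      contDiff_const.prodMk contDiff_id
    have h2 : ContDiffAt ℝ (⊤ : ℕ∞) (fun y'' : Fin n → ℝ => fderiv ℝ G (x, y'')) y' :=
      h1.comp y' (hj.contDiffAt)
    have h3 : ContDiffAt ℝ (⊤ : ℕ∞)
        (fun y'' : Fin n → ℝ => fderiv ℝ G (x, y'') (Pi.single i 1, 0)) y' :=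
      h2.clm_apply contDiffAt_const
    apply h3.congr_of_eventuallyEq
    filter_upwards [isOpen_ne.mem_nhds hy'] with z hz
    exact hpdx z hz i
  set Ψ : Fin n → (Fin n → ℝ) → ((Fin n → ℝ) →L[ℝ] ℝ) := fun i => fderiv ℝ (φ i) with hΨdef
  set A : Fin n → ((Fin n → ℝ) →L[ℝ] ((Fin n → ℝ) →L[ℝ] ℝ)) := fun i => fderiv ℝ (Ψ i) y
    with hAdef
  have hA : ∀ i, HasFDerivAt (Ψ i) (A i) y := fun i =>
    ((((hφsm y hy i).fderiv_right (m := (⊤ : ℕ∞)) (by simp))).differentiableAt (by simp)).hasFDerivAt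
  have hev : ∀ i, ∀ᶠ y' in nhds y, HasFDerivAt (φ i) (Ψ i y') y' := by
    intro i
    filter_upwards [isOpen_ne.mem_nhds hy] with z hz
    exact ((hφsm z hz i).differentiableAt (by simp)).hasFDerivAt
  have hsymm : ∀ i v w, A i v w = A i w v := fun i v w =>
    second_derivative_symmetric_of_eventually (hev i) (hA i) v w
  -- key identity from differentiating Rapcsák
  have key : ∀ l' m : Fin n, Ψ l' y (Pi.single m 1)
      = (∑ kk, A kk (Pi.single m 1) (Pi.single l' 1) * y kk) + Ψ m y (Pi.single l' 1) := by
    intro l' m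
    have hterm : ∀ kk : Fin n, HasFDerivAt (fun y' => Ψ kk y' (Pi.single l' 1) * y' kk)
        ((Ψ kk y (Pi.single l' 1)) • (ContinuousLinearMap.proj kk : (Fin n → ℝ) →L[ℝ] ℝ)
          + (y kk) • ((Ψ kk y).comp (0 : (Fin n → ℝ) →L[ℝ] (Fin n → ℝ)) + (A kk).flip (Pi.single l' 1))) y := by
      intro kk
      exact ((hA kk).clm_apply (hasFDerivAt_const _ y)).mul
        ((ContinuousLinearMap.proj kk : (Fin n → ℝ) →L[ℝ] ℝ)).hasFDerivAt
    have hsum : HasFDerivAt (fun y' => ∑ kk, Ψ kk y' (Pi.single l' 1) * y' kk)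
        (∑ kk, ((Ψ kk y (Pi.single l' 1)) • (ContinuousLinearMap.proj kk : (Fin n → ℝ) →L[ℝ] ℝ)
          + (y kk) • ((Ψ kk y).comp (0 : (Fin n → ℝ) →L[ℝ] (Fin n → ℝ)) + (A kk).flip (Pi.single l' 1)))) y :=
      HasFDerivAt.fun_sum (fun kk _ => hterm kk)
    have heq : HasFDerivAt (φ l')
        (∑ kk, ((Ψ kk y (Pi.single l' 1)) • (ContinuousLinearMap.proj kk : (Fin n → ℝ) →L[ℝ] ℝ)
          + (y kk) • ((Ψ kk y).comp (0 : (Fin n → ℝ) →L[ℝ] (Fin n → ℝ)) + (A kk).flip (Pi.single l' 1)))) y := by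
      apply hsum.congr_of_eventuallyEq
      filter_upwards [isOpen_ne.mem_nhds hy] with z hz
      exact (hRap x hx z hz l').symm
    have huniq : Ψ l' y = ∑ kk, ((Ψ kk y (Pi.single l' 1)) •
          (ContinuousLinearMap.proj kk : (Fin n → ℝ) →L[ℝ] ℝ)
          + (y kk) • ((Ψ kk y).comp (0 : (Fin n → ℝ) →L[ℝ] (Fin n → ℝ)) + (A kk).flip (Pi.single l' 1))) :=
      (((hφsm y hy l').differentiableAt (by simp)).hasFDerivAt).unique heq
    have := congrArg (fun T : (Fin n → ℝ) →L[ℝ] ℝ => T (Pi.single m 1)) huniq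
    simp only [ContinuousLinearMap.sum_apply, ContinuousLinearMap.add_apply,
      ContinuousLinearMap.smul_apply, ContinuousLinearMap.proj_apply,
      ContinuousLinearMap.comp_zero, ContinuousLinearMap.zero_apply,
      ContinuousLinearMap.flip_apply, smul_eq_mul, mul_zero, zero_add] at this
    rw [this, Finset.sum_add_distrib]
    have h5 : ∑ x1 : Fin n, Ψ x1 y (Pi.single l' 1) * (Pi.single m 1 : Fin n → ℝ) x1
        = Ψ m y (Pi.single l' 1) := by
      simp [Pi.single_apply, mul_ite, Finset.sum_ite_eq']
    rw [h5, add_comm]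
    congr 1
    exact Finset.sum_congr rfl fun kk _ => mul_comm _ _
  have h1 := key l k
  have h2 := key k l
  have hs : ∑ kk, A kk (Pi.single k 1) (Pi.single l 1) * y kk
      = ∑ kk, A kk (Pi.single l 1) (Pi.single k 1) * y kk :=
    Finset.sum_congr rfl (fun kk _ => by rw [hsymm])
  show Ψ k y (Pi.single l 1) = Ψ l y (Pi.single k 1)
  linarith
end

section
/- Let Θ(x,y) be a smooth positive function on U × (ℝⁿ \ {0}) satisfying the Funk equations Θ_{x^k} = Θ Θ_{y^k} for all k. Then for every m ≥ 0 and all indices i₁,…,i_m, the identity Θ_{x^{i₁}⋯x^{i_m}} = (1/(m+1)) [Θ^{m+1}]_{y^{i₁}⋯y^{i_m}} holds. -/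
open Filter Topology

section Directional

variable {E : Type*} [NormedAddCommGroup E] [NormedSpace ℝ E]

/-- Directional derivative operator. -/
noncomputable def Dv (v : E) (G : E → ℝ) : E → ℝ := fun p => fderiv ℝ G p v

/-- Iterated directional derivatives. -/
noncomputable def DvIter : List E → (E → ℝ) → E → ℝ
  | [], G => G
  | v :: vs, G => DvIter vs (Dv v G)

variable {S : Set E}

lemma Dv_smooth (hS : IsOpen S) {G : E → ℝ} (hG : ContDiffOn ℝ (⊤ : ℕ∞) G S) (v : E) :
    ContDiffOn ℝ (⊤ : ℕ∞) (Dv v G) S :=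
  (hG.fderiv_of_isOpen hS (by simp)).clm_apply contDiffOn_const

lemma Dv_congr (hS : IsOpen S) {F G : E → ℝ} (h : ∀ p ∈ S, F p = G p) (v : E)
    {p : E} (hp : p ∈ S) : Dv v F p = Dv v G p := by
  have : F =ᶠ[𝓝 p] G := by filter_upwards [hS.mem_nhds hp] with q hq using h q hq
  simp only [Dv, this.fderiv_eq]

lemma Dv_diffAt {F : Type*} [NormedAddCommGroup F] [NormedSpace ℝ F]
    (hS : IsOpen S) {G : E → F} (hG : ContDiffOn ℝ (⊤ : ℕ∞) G S) {p : E} (hp : p ∈ S) :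
    DifferentiableAt ℝ G p :=
  ((hG.differentiableOn (by simp)) p hp).differentiableAt (hS.mem_nhds hp)

lemma Dv_comm (hS : IsOpen S) {G : E → ℝ} (hG : ContDiffOn ℝ (⊤ : ℕ∞) G S) (u v : E)
    {p : E} (hp : p ∈ S) : Dv u (Dv v G) p = Dv v (Dv u G) p := by
  have hev : ∀ᶠ q in 𝓝 p, HasFDerivAt G (fderiv ℝ G q) q := by
    filter_upwards [hS.mem_nhds hp] with q hq using (Dv_diffAt hS hG hq).hasFDerivAt
  have hf' : ContDiffOn ℝ (⊤ : ℕ∞) (fderiv ℝ G) S := hG.fderiv_of_isOpen hS (by simp)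
  have hdf' : DifferentiableAt ℝ (fderiv ℝ G) p := Dv_diffAt hS hf' hp
  have hsym := second_derivative_symmetric_of_eventually hev hdf'.hasFDerivAt
  have key : ∀ w : E, fderiv ℝ (fun q => fderiv ℝ G q w) p
      = (ContinuousLinearMap.apply ℝ ℝ w).comp (fderiv ℝ (fderiv ℝ G) p) := by
    intro w
    exact (((ContinuousLinearMap.apply ℝ ℝ w).hasFDerivAt).comp p hdf'.hasFDerivAt).fderiv
  show fderiv ℝ (fun q => fderiv ℝ G q v) p u = fderiv ℝ (fun q => fderiv ℝ G q u) p v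
  rw [key v, key u]
  exact hsym u v

lemma DvIter_smooth (hS : IsOpen S) : ∀ (vs : List E) {G : E → ℝ},
    ContDiffOn ℝ (⊤ : ℕ∞) G S → ContDiffOn ℝ (⊤ : ℕ∞) (DvIter vs G) S
  | [], _, hG => hG
  | v :: vs, G, hG => DvIter_smooth hS vs (Dv_smooth hS hG v)

lemma DvIter_congr (hS : IsOpen S) : ∀ (vs : List E) {F G : E → ℝ},
    (∀ p ∈ S, F p = G p) → ∀ p ∈ S, DvIter vs F p = DvIter vs G p
  | [], _, _, h, p, hp => h p hp
  | v :: vs, F, G, h, p, hp =>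
    DvIter_congr hS vs (fun q hq => Dv_congr hS h v hq) p hp

lemma DvIter_comm (hS : IsOpen S) : ∀ (vs : List E) {G : E → ℝ},
    ContDiffOn ℝ (⊤ : ℕ∞) G S → ∀ (u : E), ∀ p ∈ S,
      DvIter vs (Dv u G) p = Dv u (DvIter vs G) p
  | [], _, _, _, _, _ => rfl
  | v :: vs, G, hG, u, p, hp => by
    show DvIter vs (Dv v (Dv u G)) p = Dv u (DvIter vs (Dv v G)) p
    have h1 : DvIter vs (Dv v (Dv u G)) p = DvIter vs (Dv u (Dv v G)) p :=
      DvIter_congr hS vs (fun q hq => Dv_comm hS hG v u hq) p hp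
    rw [h1]
    exact DvIter_comm hS vs (Dv_smooth hS hG v) u p hp

lemma DvIter_append (vs ws : List E) (G : E → ℝ) :
    DvIter (vs ++ ws) G = DvIter ws (DvIter vs G) := by
  induction vs generalizing G with
  | nil => rfl
  | cons v vs ih => exact ih (Dv v G)

lemma Dv_const_mul (hS : IsOpen S) {G : E → ℝ} (hG : ContDiffOn ℝ (⊤ : ℕ∞) G S) (c : ℝ) (v : E)
    {p : E} (hp : p ∈ S) : Dv v (fun q => c * G q) p = c * Dv v G p := by
  simp only [Dv, fderiv_const_mul (Dv_diffAt hS hG hp) c]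
  rfl

lemma DvIter_const_mul (hS : IsOpen S) : ∀ (vs : List E) {G : E → ℝ},
    ContDiffOn ℝ (⊤ : ℕ∞) G S → ∀ (c : ℝ), ∀ p ∈ S,
      DvIter vs (fun q => c * G q) p = c * DvIter vs G p
  | [], _, _, _, _, _ => rfl
  | v :: vs, G, hG, c, p, hp => by
    show DvIter vs (Dv v fun q => c * G q) p = c * DvIter vs (Dv v G) p
    have h1 : DvIter vs (Dv v fun q => c * G q) p
        = DvIter vs (fun q => c * Dv v G q) p :=
      DvIter_congr hS vs (fun q hq => Dv_const_mul hS hG c v hq) p hp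
    rw [h1]
    exact DvIter_const_mul hS vs (Dv_smooth hS hG v) c p hp

lemma Dv_pow {G : E → ℝ} {p : E} (hd : DifferentiableAt ℝ G p) (v : E) :
    ∀ (m : ℕ), Dv v (fun q => G q ^ (m + 1)) p = ((m + 1 : ℝ) * G p ^ m) * Dv v G p
  | 0 => by simp [Dv]
  | m + 1 => by
    have heq : (fun q => G q ^ (m + 2)) = fun q => G q * G q ^ (m + 1) := by
      funext q; ring
    simp only [Dv] at *
    rw [heq, fderiv_fun_mul (d := fun q => G q ^ (m + 1)) hd (hd.pow (m + 1))]
    simp only [ContinuousLinearMap.add_apply, ContinuousLinearMap.smul_apply, smul_eq_mul]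
    rw [show fderiv ℝ (fun q => G q ^ (m + 1)) p v = ((m + 1 : ℝ) * G p ^ m) * fderiv ℝ G p v
      from Dv_pow hd v m]
    push_cast
    ring

end Directional
/-- Iterated partial derivatives in the `x`-variables along a list of indices. -/
noncomputable def pdxIter {n : ℕ} (F : (Fin n → ℝ) → (Fin n → ℝ) → ℝ) :
    List (Fin n) → (Fin n → ℝ) → (Fin n → ℝ) → ℝ
  | [] => F
  | k :: ks => pdxIter (pdx F k) ks

/-- Iterated partial derivatives in the `y`-variables along a list of indices. -/
noncomputable def pdyIter {n : ℕ} (F : (Fin n → ℝ) → (Fin n → ℝ) → ℝ) :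
    List (Fin n) → (Fin n → ℝ) → (Fin n → ℝ) → ℝ
  | [] => F
  | k :: ks => pdyIter (pdy F k) ks

section Bridge

variable {n : ℕ}

/-- Joint (uncurried) version of a two-variable function. -/
def JJ (F : (Fin n → ℝ) → (Fin n → ℝ) → ℝ) : (Fin n → ℝ) × (Fin n → ℝ) → ℝ :=
  fun p => F p.1 p.2

noncomputable def vx (k : Fin n) : (Fin n → ℝ) × (Fin n → ℝ) := (Pi.single k 1, 0)
noncomputable def vy (k : Fin n) : (Fin n → ℝ) × (Fin n → ℝ) := (0, Pi.single k 1)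

lemma pdx_eq_Dv {F : (Fin n → ℝ) → (Fin n → ℝ) → ℝ} {x y : Fin n → ℝ}
    (hd : DifferentiableAt ℝ (JJ F) (x, y)) (k : Fin n) :
    pdx F k x y = Dv (vx k) (JJ F) (x, y) := by
  have h : HasFDerivAt (fun x' => F x' y)
      ((fderiv ℝ (JJ F) (x, y)).comp (ContinuousLinearMap.inl ℝ _ _)) x :=
    by have := hd.hasFDerivAt.comp x (hasFDerivAt_prodMk_left (𝕜 := ℝ) x y); exact this
  simp only [pdx, h.fderiv]
  rfl

lemma pdy_eq_Dv {F : (Fin n → ℝ) → (Fin n → ℝ) → ℝ} {x y : Fin n → ℝ}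
    (hd : DifferentiableAt ℝ (JJ F) (x, y)) (k : Fin n) :
    pdy F k x y = Dv (vy k) (JJ F) (x, y) := by
  have h : HasFDerivAt (fun y' => F x y')
      ((fderiv ℝ (JJ F) (x, y)).comp (ContinuousLinearMap.inr ℝ _ _)) y :=
    hd.hasFDerivAt.comp y (hasFDerivAt_prodMk_right (𝕜 := ℝ) x y)
  simp only [pdy, h.fderiv]
  rfl

variable {U V : Set (Fin n → ℝ)}

lemma pdx_congr (hU : IsOpen U) {F G : (Fin n → ℝ) → (Fin n → ℝ) → ℝ}
    (h : ∀ x ∈ U, ∀ y ∈ V, F x y = G x y) (k : Fin n) {x y : Fin n → ℝ}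
    (hx : x ∈ U) (hy : y ∈ V) : pdx F k x y = pdx G k x y := by
  have he : (fun x' => F x' y) =ᶠ[nhds x] fun x' => G x' y := by
    filter_upwards [hU.mem_nhds hx] with x' hx' using h x' hx' y hy
  simp only [pdx, he.fderiv_eq]

lemma pdy_congr (hV : IsOpen V) {F G : (Fin n → ℝ) → (Fin n → ℝ) → ℝ}
    (h : ∀ x ∈ U, ∀ y ∈ V, F x y = G x y) (k : Fin n) {x y : Fin n → ℝ}
    (hx : x ∈ U) (hy : y ∈ V) : pdy F k x y = pdy G k x y := by
  have he : (fun y' => F x y') =ᶠ[nhds y] fun y' => G x y' := by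
    filter_upwards [hV.mem_nhds hy] with y' hy' using h x hx y' hy'
  simp only [pdy, he.fderiv_eq]

lemma pdxIter_congr (hU : IsOpen U) (hV : IsOpen V) :
    ∀ (ids : List (Fin n)) {F G : (Fin n → ℝ) → (Fin n → ℝ) → ℝ},
    (∀ x ∈ U, ∀ y ∈ V, F x y = G x y) →
    ∀ x ∈ U, ∀ y ∈ V, pdxIter F ids x y = pdxIter G ids x y
  | [], _, _, h, x, hx, y, hy => h x hx y hy
  | k :: ks, F, G, h, x, hx, y, hy =>
    pdxIter_congr hU hV ks
      (fun x' hx' y' hy' => pdx_congr hU h k hx' hy') x hx y hy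

lemma pdyIter_congr (hU : IsOpen U) (hV : IsOpen V) :
    ∀ (ids : List (Fin n)) {F G : (Fin n → ℝ) → (Fin n → ℝ) → ℝ},
    (∀ x ∈ U, ∀ y ∈ V, F x y = G x y) →
    ∀ x ∈ U, ∀ y ∈ V, pdyIter F ids x y = pdyIter G ids x y
  | [], _, _, h, x, hx, y, hy => h x hx y hy
  | k :: ks, F, G, h, x, hx, y, hy =>
    pdyIter_congr hU hV ks
      (fun x' hx' y' hy' => pdy_congr hV h k hx' hy') x hx y hy

lemma pdxIter_bridge (hU : IsOpen U) (hV : IsOpen V) :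
    ∀ (ids : List (Fin n)) (F : (Fin n → ℝ) → (Fin n → ℝ) → ℝ),
    ContDiffOn ℝ (⊤ : ℕ∞) (JJ F) (U ×ˢ V) →
    ∀ x ∈ U, ∀ y ∈ V,
      pdxIter F ids x y = DvIter (ids.map vx) (JJ F) (x, y)
  | [], _, _, _, _, _, _ => rfl
  | k :: ks, F, hF, x, hx, y, hy => by
    have hS : IsOpen (U ×ˢ V) := hU.prod hV
    have hDv : ContDiffOn ℝ (⊤ : ℕ∞) (Dv (vx k) (JJ F)) (U ×ˢ V) := Dv_smooth hS hF _
    have h1 : ∀ x' ∈ U, ∀ y' ∈ V,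
        pdx F k x' y' = (fun x'' y'' => Dv (vx k) (JJ F) (x'', y'')) x' y' :=
      fun x' hx' y' hy' =>
        pdx_eq_Dv (Dv_diffAt hS hF (Set.mk_mem_prod hx' hy')) k
    show pdxIter (pdx F k) ks x y = DvIter (ks.map vx) (Dv (vx k) (JJ F)) (x, y)
    rw [pdxIter_congr hU hV ks h1 x hx y hy]
    exact pdxIter_bridge hU hV ks (fun x'' y'' => Dv (vx k) (JJ F) (x'', y'')) hDv x hx y hy

lemma pdyIter_bridge (hU : IsOpen U) (hV : IsOpen V) :
    ∀ (ids : List (Fin n)) (F : (Fin n → ℝ) → (Fin n → ℝ) → ℝ),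
    ContDiffOn ℝ (⊤ : ℕ∞) (JJ F) (U ×ˢ V) →
    ∀ x ∈ U, ∀ y ∈ V,
      pdyIter F ids x y = DvIter (ids.map vy) (JJ F) (x, y)
  | [], _, _, _, _, _, _ => rfl
  | k :: ks, F, hF, x, hx, y, hy => by
    have hS : IsOpen (U ×ˢ V) := hU.prod hV
    have hDv : ContDiffOn ℝ (⊤ : ℕ∞) (Dv (vy k) (JJ F)) (U ×ˢ V) := Dv_smooth hS hF _
    have h1 : ∀ x' ∈ U, ∀ y' ∈ V,
        pdy F k x' y' = (fun x'' y'' => Dv (vy k) (JJ F) (x'', y'')) x' y' :=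
      fun x' hx' y' hy' =>
        pdy_eq_Dv (Dv_diffAt hS hF (Set.mk_mem_prod hx' hy')) k
    show pdyIter (pdy F k) ks x y = DvIter (ks.map vy) (Dv (vy k) (JJ F)) (x, y)
    rw [pdyIter_congr hU hV ks h1 x hx y hy]
    exact pdyIter_bridge hU hV ks (fun x'' y'' => Dv (vy k) (JJ F) (x'', y'')) hDv x hx y hy

end Bridge

/-- If `Θ` satisfies the Funk equations `Θ_{x^k} = Θ Θ_{y^k}`, then
`Θ_{x^{i₁}⋯x^{i_m}} = (1/(m+1)) [Θ^{m+1}]_{y^{i₁}⋯y^{i_m}}` for all `m` and indices. -/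
theorem stmt_4 (n : ℕ) (U : Set (Fin n → ℝ)) (hU : IsOpen U)
    (Θ : (Fin n → ℝ) → (Fin n → ℝ) → ℝ)
    (hsmooth : ContDiffOn ℝ (⊤ : ℕ∞) (fun p : (Fin n → ℝ) × (Fin n → ℝ) => Θ p.1 p.2)
      (U ×ˢ {y : Fin n → ℝ | y ≠ 0}))
    (hpos : ∀ x ∈ U, ∀ y : Fin n → ℝ, y ≠ 0 → 0 < Θ x y)
    (hFunk : ∀ x ∈ U, ∀ y : Fin n → ℝ, y ≠ 0 → ∀ k : Fin n,
      pdx Θ k x y = Θ x y * pdy Θ k x y) :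
    ∀ ids : List (Fin n), ∀ x ∈ U, ∀ y : Fin n → ℝ, y ≠ 0 →
      pdxIter Θ ids x y
        = (1 / (ids.length + 1 : ℝ)) *
          pdyIter (fun x' y' => Θ x' y' ^ (ids.length + 1)) ids x y := by
  intro ids x hx y hy
  have hV : IsOpen {y : Fin n → ℝ | y ≠ 0} := isOpen_ne
  set V := {y : Fin n → ℝ | y ≠ 0} with hVdef
  have hS : IsOpen (U ×ˢ V) := hU.prod hV
  have hΘ : ContDiffOn ℝ (⊤ : ℕ∞) (JJ Θ) (U ×ˢ V) := hsmooth
  have hpow : ∀ r : ℕ, ContDiffOn ℝ (⊤ : ℕ∞) (fun q => JJ Θ q ^ r) (U ×ˢ V) :=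
    fun r => hΘ.pow r
  -- joint form of the Funk equations
  have hFunk' : ∀ (k : Fin n), ∀ p ∈ U ×ˢ V,
      Dv (vx k) (JJ Θ) p = JJ Θ p * Dv (vy k) (JJ Θ) p := by
    rintro k ⟨x', y'⟩ ⟨hx', hy'⟩
    have hd : DifferentiableAt ℝ (JJ Θ) (x', y') :=
      Dv_diffAt hS hΘ (Set.mk_mem_prod hx' hy')
    rw [← pdx_eq_Dv hd k, ← pdy_eq_Dv hd k]
    exact hFunk x' hx' y' hy' k
  -- the main claim, in joint form
  have claim : ∀ ids : List (Fin n), ∀ p ∈ U ×ˢ V,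
      DvIter (ids.map vx) (JJ Θ) p
        = (1 / (ids.length + 1 : ℝ)) *
          DvIter (ids.map vy) (fun q => JJ Θ q ^ (ids.length + 1)) p := by
    intro ids
    induction ids using List.reverseRecOn with
    | nil =>
      intro p hp
      simp only [List.map_nil, List.length_nil, DvIter, Nat.cast_zero, zero_add, pow_one]
      norm_num
    | append_singleton ids j ih =>
      intro p hp
      have hmne : ((ids.length : ℝ) + 1) ≠ 0 := by positivity
      have hmne2 : ((ids.length : ℝ) + 2) ≠ 0 := by positivity
      have e4 : ∀ q ∈ U ×ˢ V,
          Dv (vx j) (fun q' => JJ Θ q' ^ (ids.length + 1)) q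
            = (fun q' => ((ids.length + 1 : ℝ) / (ids.length + 2 : ℝ)) *
                Dv (vy j) (fun q'' => JJ Θ q'' ^ (ids.length + 2)) q') q := by
        intro q hq
        have hd : DifferentiableAt ℝ (JJ Θ) q := Dv_diffAt hS hΘ hq
        have h1 := Dv_pow hd (vx j) ids.length
        have h2 := Dv_pow hd (vy j) (ids.length + 1)
        simp only []
        rw [h1, show ids.length + 1 + 1 = ids.length + 2 from rfl] at *
        rw [h2, hFunk' j q hq]
        push_cast
        field_simp
        ring
      calc DvIter ((ids ++ [j]).map vx) (JJ Θ) p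
          = Dv (vx j) (DvIter (ids.map vx) (JJ Θ)) p := by
            rw [List.map_append, DvIter_append]; rfl
        _ = Dv (vx j) (fun q => (1 / (ids.length + 1 : ℝ)) *
              DvIter (ids.map vy) (fun q' => JJ Θ q' ^ (ids.length + 1)) q) p :=
            Dv_congr hS ih _ hp
        _ = (1 / (ids.length + 1 : ℝ)) *
              Dv (vx j) (DvIter (ids.map vy) (fun q' => JJ Θ q' ^ (ids.length + 1))) p :=
            Dv_const_mul hS (DvIter_smooth hS _ (hpow _)) _ _ hp
        _ = (1 / (ids.length + 1 : ℝ)) *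
              DvIter (ids.map vy) (Dv (vx j) (fun q' => JJ Θ q' ^ (ids.length + 1))) p := by
            rw [DvIter_comm hS _ (hpow _) _ p hp]
        _ = (1 / (ids.length + 1 : ℝ)) *
              DvIter (ids.map vy) (fun q' => ((ids.length + 1 : ℝ) / (ids.length + 2 : ℝ)) *
                Dv (vy j) (fun q'' => JJ Θ q'' ^ (ids.length + 2)) q') p := by
            rw [DvIter_congr hS _ e4 p hp]
        _ = (1 / (ids.length + 1 : ℝ)) * (((ids.length + 1 : ℝ) / (ids.length + 2 : ℝ)) *
              DvIter (ids.map vy) (Dv (vy j) (fun q'' => JJ Θ q'' ^ (ids.length + 2))) p) := by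
            rw [DvIter_const_mul hS _ (Dv_smooth hS (hpow _) _) _ p hp]
        _ = (1 / (ids.length + 2 : ℝ)) *
              DvIter (ids.map vy) (Dv (vy j) (fun q'' => JJ Θ q'' ^ (ids.length + 2))) p := by
            rw [← mul_assoc]; congr 1; field_simp
        _ = (1 / (ids.length + 2 : ℝ)) *
              Dv (vy j) (DvIter (ids.map vy) (fun q'' => JJ Θ q'' ^ (ids.length + 2))) p := by
            rw [DvIter_comm hS _ (hpow _) _ p hp]
        _ = (1 / ((ids ++ [j]).length + 1 : ℝ)) *
              DvIter ((ids ++ [j]).map vy) (fun q => JJ Θ q ^ ((ids ++ [j]).length + 1)) p := by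
            rw [List.map_append, DvIter_append]
            have hl : (ids ++ [j]).length = ids.length + 1 := by simp
            rw [hl]
            congr 1
            push_cast
            ring
  have hbx := pdxIter_bridge hU hV ids Θ hΘ x hx y hy
  have hby := pdyIter_bridge hU hV ids (fun x' y' => Θ x' y' ^ (ids.length + 1))
    (hpow (ids.length + 1)) x hx y hy
  rw [hbx, hby]
  exact claim ids (x, y) (Set.mk_mem_prod hx hy)
end

section
/- The Funk metric Θ(x,y) = (√(|y|² − (|x|²|y|² − ⟨x,y⟩²)) + ⟨x,y⟩)/(1 − |x|²) on the unit ball of ℝⁿ satisfies the Funk equations Θ_{x^k} = Θ·Θ_{y^k} for all k, at all points with |x| < 1 and y ≠ 0. -/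
/-- Squared Euclidean norm on `ℝⁿ`. -/
def nsq {n : ℕ} (x : Fin n → ℝ) : ℝ := ∑ i, x i ^ 2

/-- Euclidean inner product on `ℝⁿ`. -/
def dotp {n : ℕ} (x y : Fin n → ℝ) : ℝ := ∑ i, x i * y i

/-- The Funk metric of the Euclidean norm on the unit ball. -/
noncomputable def FunkBall {n : ℕ} (x y : Fin n → ℝ) : ℝ :=
  (Real.sqrt (nsq y - (nsq x * nsq y - dotp x y ^ 2)) + dotp x y) / (1 - nsq x)

/-!
Along a line `t ↦ x + t • v`, the quantities `|x|²`, `⟨x, y⟩` and `|y|²` are polynomials in `t`,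
so both directional derivatives of `Θ` come from one chain rule for the profile
`(q, p, r) ↦ (√(r - (q r - p²)) + p) / (1 - q)`. The Funk equation is then an algebraic identity
in `s = √(r - (q r - p²))`, which closes because `s² = r (1 - q) + p²`.
-/

open Finset

noncomputable def funkProfile (q p r : ℝ) : ℝ := (√(r - (q * r - p ^ 2)) + p) / (1 - q)

theorem HasDerivAt.funkProfile {q p r : ℝ → ℝ} {q' p' r' t : ℝ} (hq : HasDerivAt q q' t)
    (hp : HasDerivAt p p' t) (hr : HasDerivAt r r' t)
    (hA : r t - (q t * r t - p t ^ 2) ≠ 0) (hq1 : 1 - q t ≠ 0) :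
    HasDerivAt (fun s => _root_.funkProfile (q s) (p s) (r s))
      (((r' - (q' * r t + q t * r' - 2 * p t * p')) / (2 * √(r t - (q t * r t - p t ^ 2))) + p' +
          _root_.funkProfile (q t) (p t) (r t) * q') / (1 - q t)) t := by
  refine (((hr.sub ((hq.mul hr).sub (hp.pow 2))).sqrt hA).add hp).div
    ((hasDerivAt_const t 1).sub hq) hq1 |>.congr_deriv ?_
  simp only [Pi.add_apply, Pi.sub_apply, Pi.mul_apply, Pi.pow_apply, _root_.funkProfile]
  field_simp
  ring

lemma funkProfile_funk_equation {q p r : ℝ} (a b : ℝ) (hA : 0 < r - (q * r - p ^ 2))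
    (hq : 1 - q ≠ 0) :
    ((2 * p * b - 2 * a * r) / (2 * √(r - (q * r - p ^ 2))) + b + funkProfile q p r * (2 * a)) /
        (1 - q) =
      funkProfile q p r *
        (((2 * b * (1 - q) + 2 * p * a) / (2 * √(r - (q * r - p ^ 2))) + a) / (1 - q)) := by
  have hs := Real.sq_sqrt hA.le
  have hs0 := (Real.sqrt_pos.2 hA).ne'
  unfold funkProfile
  generalize √(r - (q * r - p ^ 2)) = s at *
  field_simp
  linear_combination a * hs

lemma nsq_add_smul {n : ℕ} (x v : Fin n → ℝ) (t : ℝ) :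
    nsq (x + t • v) = nsq x + 2 * t * dotp x v + t ^ 2 * nsq v := by
  simp only [nsq, dotp, Pi.add_apply, Pi.smul_apply, smul_eq_mul, mul_sum, ← sum_add_distrib]
  exact sum_congr rfl fun i _ => by ring

lemma dotp_add_smul_left {n : ℕ} (x v y : Fin n → ℝ) (t : ℝ) :
    dotp (x + t • v) y = dotp x y + t * dotp v y := by
  simp only [dotp, Pi.add_apply, Pi.smul_apply, smul_eq_mul, mul_sum, ← sum_add_distrib]
  exact sum_congr rfl fun i _ => by ring

lemma dotp_comm {n : ℕ} (x y : Fin n → ℝ) : dotp x y = dotp y x := by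
  simp only [dotp, mul_comm]

lemma nsq_pos {n : ℕ} {y : Fin n → ℝ} (hy : y ≠ 0) : 0 < nsq y := by
  refine (sum_nonneg fun i _ => sq_nonneg (y i)).lt_of_ne' fun h => hy (funext fun i => ?_)
  simpa using (sum_eq_zero_iff_of_nonneg fun i _ => sq_nonneg (y i)).1 h i (mem_univ i)

lemma hasDerivAt_nsq_add_smul {n : ℕ} (x v : Fin n → ℝ) :
    HasDerivAt (fun t : ℝ => nsq (x + t • v)) (2 * dotp x v) 0 := by
  simp_rw [nsq_add_smul]
  exact ((((hasDerivAt_id' (0 : ℝ)).const_mul 2).mul_const (dotp x v)).const_add (nsq x)).fun_add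
    ((hasDerivAt_pow 2 (0 : ℝ)).mul_const (nsq v)) |>.congr_deriv (by simp)

lemma hasDerivAt_dotp_add_smul_left {n : ℕ} (x v y : Fin n → ℝ) :
    HasDerivAt (fun t : ℝ => dotp (x + t • v) y) (dotp v y) 0 := by
  simp_rw [dotp_add_smul_left]
  simpa using ((hasDerivAt_id (0 : ℝ)).mul_const (dotp v y)).const_add (dotp x y)

lemma hasDerivAt_dotp_add_smul_right {n : ℕ} (x y v : Fin n → ℝ) :
    HasDerivAt (fun t : ℝ => dotp x (y + t • v)) (dotp x v) 0 := by
  simp_rw [dotp_comm x]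
  exact hasDerivAt_dotp_add_smul_left y v x

@[fun_prop]
lemma Differentiable.nsq {n : ℕ} {E : Type*} [NormedAddCommGroup E] [NormedSpace ℝ E]
    {f : E → Fin n → ℝ} (hf : Differentiable ℝ f) : Differentiable ℝ (fun z => nsq (f z)) := by
  unfold _root_.nsq
  fun_prop

@[fun_prop]
lemma Differentiable.dotp {n : ℕ} {E : Type*} [NormedAddCommGroup E] [NormedSpace ℝ E]
    {f g : E → Fin n → ℝ} (hf : Differentiable ℝ f) (hg : Differentiable ℝ g) :
    Differentiable ℝ (fun z => dotp (f z) (g z)) := by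
  unfold _root_.dotp
  fun_prop

section FunkBall

variable {n : ℕ} {x y : Fin n → ℝ}

lemma differentiableAt_funkBall_left (hA : nsq y - (nsq x * nsq y - dotp x y ^ 2) ≠ 0)
    (hq : 1 - nsq x ≠ 0) : DifferentiableAt ℝ (fun x' => FunkBall x' y) x := by
  unfold FunkBall
  fun_prop (disch := assumption)

lemma differentiableAt_funkBall_right (hA : nsq y - (nsq x * nsq y - dotp x y ^ 2) ≠ 0) :
    DifferentiableAt ℝ (fun y' => FunkBall x y') y := by
  unfold FunkBall
  fun_prop (disch := assumption)

lemma hasLineDerivAt_funkBall_left (v : Fin n → ℝ)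
    (hA : nsq y - (nsq x * nsq y - dotp x y ^ 2) ≠ 0) (hq : 1 - nsq x ≠ 0) :
    HasLineDerivAt ℝ (fun x' => FunkBall x' y)
      (((2 * dotp x y * dotp y v - 2 * dotp x v * nsq y) /
          (2 * √(nsq y - (nsq x * nsq y - dotp x y ^ 2))) + dotp y v +
        FunkBall x y * (2 * dotp x v)) / (1 - nsq x)) x v := by
  have h := HasDerivAt.funkProfile (hasDerivAt_nsq_add_smul x v)
    (hasDerivAt_dotp_add_smul_left x v y) (hasDerivAt_const 0 (nsq y))
    (by simpa using hA) (by simpa using hq)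
  simp only [zero_smul, add_zero] at h
  exact h.congr_deriv (by rw [dotp_comm v y, FunkBall, funkProfile]; ring)

lemma hasLineDerivAt_funkBall_right (v : Fin n → ℝ)
    (hA : nsq y - (nsq x * nsq y - dotp x y ^ 2) ≠ 0) (hq : 1 - nsq x ≠ 0) :
    HasLineDerivAt ℝ (fun y' => FunkBall x y')
      (((2 * dotp y v * (1 - nsq x) + 2 * dotp x y * dotp x v) /
          (2 * √(nsq y - (nsq x * nsq y - dotp x y ^ 2))) + dotp x v) / (1 - nsq x)) y v := by
  have h := HasDerivAt.funkProfile (hasDerivAt_const 0 (nsq x))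
    (hasDerivAt_dotp_add_smul_right x y v) (hasDerivAt_nsq_add_smul y v)
    (by simpa using hA) (by simpa using hq)
  simp only [zero_smul, add_zero] at h
  exact h.congr_deriv (by ring)

end FunkBall

/-- the Funk metric of the Euclidean unit ball satisfies the
Funk equations `Θ_{x^k} = Θ·Θ_{y^k}`. -/
theorem stmt_7 (n : ℕ) (x y : Fin n → ℝ) (hx : nsq x < 1) (hy : y ≠ 0) (k : Fin n) :
    pdx (FunkBall (n := n)) k x y = FunkBall x y * pdy (FunkBall (n := n)) k x y := by
  have hq : 1 - nsq x ≠ 0 := (sub_pos.2 hx).ne'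
  have hA : 0 < nsq y - (nsq x * nsq y - dotp x y ^ 2) := by
    nlinarith [nsq_pos hy, sq_nonneg (dotp x y)]
  have hdx := ((differentiableAt_funkBall_left hA.ne' hq).hasFDerivAt.hasLineDerivAt _).unique
    (hasLineDerivAt_funkBall_left (Pi.single k 1) hA.ne' hq)
  have hdy := ((differentiableAt_funkBall_right hA.ne').hasFDerivAt.hasLineDerivAt _).unique
    (hasLineDerivAt_funkBall_right (Pi.single k 1) hA.ne' hq)
  rw [pdx, pdy, hdx, hdy]
  exact funkProfile_funk_equation _ _ hA hq
end

section
/- Let φ be positively homogeneous of degree one on ℝⁿ and a ∈ ℝⁿ. Define F(x,y) := φ((1 + ⟨a,x⟩)y − ⟨a,y⟩x)/(1 + ⟨a,x⟩)² and P(x,y) := −⟨a,y⟩/(1 + ⟨a,x⟩), on the region 1 + ⟨a,x⟩ > 0. Then F_{x^k} = (PF)_{y^k} for all k. -/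
noncomputable def dotL {n : ℕ} (a : Fin n → ℝ) : (Fin n → ℝ) →L[ℝ] ℝ :=
  ∑ i, a i • ContinuousLinearMap.proj i

lemma dotL_apply {n : ℕ} (a v : Fin n → ℝ) : dotL a v = dotp a v := by
  simp [dotL, dotp, ContinuousLinearMap.sum_apply, ContinuousLinearMap.smul_apply,
    ContinuousLinearMap.proj_apply, smul_eq_mul]

lemma hasFDerivAt_dotp {n : ℕ} (a x₀ : Fin n → ℝ) :
    HasFDerivAt (fun v => dotp a v) (dotL a) x₀ := by
  have : (fun v : Fin n → ℝ => dotp a v) = fun v => dotL a v :=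
    funext fun v => (dotL_apply a v).symm
  rw [this]
  exact (dotL a).hasFDerivAt

lemma dotp_single {n : ℕ} (a : Fin n → ℝ) (k : Fin n) : dotp a (Pi.single k 1) = a k := by
  simp [dotp, Pi.single_apply, mul_ite, Finset.sum_ite_eq']

lemma euler_identity {n : ℕ} (φ : (Fin n → ℝ) → ℝ) (u : Fin n → ℝ) (hu : u ≠ 0)
    (hφhom : ∀ y : Fin n → ℝ, y ≠ 0 → ∀ c : ℝ, 0 < c → φ (c • y) = c * φ y)
    (D : (Fin n → ℝ) →L[ℝ] ℝ) (hφd : HasFDerivAt φ D u) : D u = φ u := by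
  have h2 : HasDerivAt (fun c : ℝ => c • u) u 1 := by
    simpa using (hasDerivAt_id (1:ℝ)).smul_const u
  have h1 : HasDerivAt (fun c : ℝ => φ (c • u)) (D u) 1 := by
    have hφd' : HasFDerivAt φ D ((1:ℝ) • u) := by rwa [one_smul]
    exact hφd'.comp_hasDerivAt (x := 1) h2
  have h3 : (fun c : ℝ => φ (c • u)) =ᶠ[nhds (1:ℝ)] fun c => c * φ u := by
    filter_upwards [Ioi_mem_nhds (show (0:ℝ) < 1 by norm_num)] with c hc
    exact hφhom u hu c hc
  have h4 : HasDerivAt (fun c : ℝ => c * φ u) (D u) 1 := h1.congr_of_eventuallyEq h3.symm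
  have h5 : HasDerivAt (fun c : ℝ => c * φ u) (φ u) 1 := by
    simpa using (hasDerivAt_id (1:ℝ)).mul_const (φ u)
  exact h4.unique h5

/-- for `F(x,y) = φ((1+⟨a,x⟩)y − ⟨a,y⟩x)/(1+⟨a,x⟩)²` and
`P(x,y) = −⟨a,y⟩/(1+⟨a,x⟩)` on `{1+⟨a,x⟩ > 0}`, one has `F_{x^k} = (PF)_{y^k}`. -/
theorem stmt_15 (n : ℕ) (φ : (Fin n → ℝ) → ℝ)
    (hφsmooth : ContDiffOn ℝ (⊤ : ℕ∞) φ {y : Fin n → ℝ | y ≠ 0})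
    (hφhom : ∀ y : Fin n → ℝ, y ≠ 0 → ∀ c : ℝ, 0 < c → φ (c • y) = c * φ y)
    (a : Fin n → ℝ)
    (F P : (Fin n → ℝ) → (Fin n → ℝ) → ℝ)
    (hF : ∀ x y : Fin n → ℝ,
      F x y = φ ((1 + dotp a x) • y - dotp a y • x) / (1 + dotp a x) ^ 2)
    (hP : ∀ x y : Fin n → ℝ, P x y = -dotp a y / (1 + dotp a x)) :
    ∀ x y : Fin n → ℝ, 0 < 1 + dotp a x → (1 + dotp a x) • y - dotp a y • x ≠ 0 →
      ∀ k : Fin n, pdx F k x y = pdy (fun x' y' => P x' y' * F x' y') k x y := by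
  intro x y hs hu k
  have hsne : (1 + dotp a x) ≠ 0 := ne_of_gt hs
  set s : ℝ := 1 + dotp a x with hsdef
  set u : Fin n → ℝ := s • y - dotp a y • x with hudef
  -- differentiability of φ at u
  have hopen : IsOpen {y : Fin n → ℝ | y ≠ 0} := isOpen_ne
  have hφd : HasFDerivAt φ (fderiv ℝ φ u) u :=
    ((hφsmooth.contDiffAt (hopen.mem_nhds hu)).differentiableAt (by simp)).hasFDerivAt
  set D := fderiv ℝ φ u with hD
  have heuler : D u = φ u := euler_identity φ u hu hφhom D hφd
  have heuler2 : s * D y - dotp a y * D x = φ u := by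
    rw [← heuler, hudef, map_sub, map_smul, map_smul, smul_eq_mul, smul_eq_mul]
  -- LHS derivative
  have hinner1 : HasFDerivAt (fun x' => (1 + dotp a x') • y - dotp a y • x')
      ((dotL a).smulRight y - dotp a y • ContinuousLinearMap.id ℝ (Fin n → ℝ)) x := by
    have h1 : HasFDerivAt (fun x' => (1 + dotp a x') • y) ((dotL a).smulRight y) x :=
      ((hasFDerivAt_dotp a x).const_add 1).smul_const y
    have h2 : HasFDerivAt (fun x' : Fin n → ℝ => dotp a y • x')
        (dotp a y • ContinuousLinearMap.id ℝ (Fin n → ℝ)) x :=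
      (hasFDerivAt_id x).const_smul (dotp a y)
    exact h1.sub h2
  have hg1 : HasFDerivAt (fun x' => φ ((1 + dotp a x') • y - dotp a y • x'))
      (D.comp ((dotL a).smulRight y - dotp a y • ContinuousLinearMap.id ℝ (Fin n → ℝ))) x :=
    hφd.comp x hinner1
  have hsum : HasFDerivAt (fun x' => 1 + dotp a x') (dotL a) x :=
    (hasFDerivAt_dotp a x).const_add 1
  have hg2 : HasFDerivAt (fun x' => (((1 + dotp a x') ^ 2)⁻¹)) _ x :=
    ((hasDerivAt_pow 2 s).inv (pow_ne_zero 2 hsne)).comp_hasFDerivAt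
      (h₂ := fun t : ℝ => (t ^ 2)⁻¹) (f := fun x' => 1 + dotp a x') x hsum
  have hLHS : HasFDerivAt
      (fun x' => φ ((1 + dotp a x') • y - dotp a y • x') * ((1 + dotp a x') ^ 2)⁻¹) _ x :=
    hg1.mul hg2
  -- RHS derivative
  have hinner2 : HasFDerivAt (fun y' => s • y' - dotp a y' • x)
      (s • ContinuousLinearMap.id ℝ (Fin n → ℝ) - (dotL a).smulRight x) y := by
    have h1 : HasFDerivAt (fun y' : Fin n → ℝ => s • y')
        (s • ContinuousLinearMap.id ℝ (Fin n → ℝ)) y :=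
      (hasFDerivAt_id y).const_smul s
    have h2 : HasFDerivAt (fun y' => dotp a y' • x) ((dotL a).smulRight x) y :=
      (hasFDerivAt_dotp a y).smul_const x
    exact h1.sub h2
  have hq1 : HasFDerivAt (fun y' => -dotp a y' * s⁻¹) _ y :=
    ((hasFDerivAt_dotp a y).neg).mul_const s⁻¹
  have hq2 : HasFDerivAt (fun y' => φ (s • y' - dotp a y' • x) * (s ^ 2)⁻¹) _ y :=
    (hφd.comp y hinner2).mul_const ((s ^ 2)⁻¹)
  have hRHS : HasFDerivAt
      (fun y' => (-dotp a y' * s⁻¹) * (φ (s • y' - dotp a y' • x) * (s ^ 2)⁻¹)) _ y :=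
    hq1.mul hq2
  -- rewrite goal
  have egoalL : (fun x' => F x' y)
      = fun x' => φ ((1 + dotp a x') • y - dotp a y • x') * ((1 + dotp a x') ^ 2)⁻¹ := by
    funext x'
    rw [hF, div_eq_mul_inv]
  have egoalR : (fun y' => P x y' * F x y')
      = fun y' => (-dotp a y' * s⁻¹) * (φ (s • y' - dotp a y' • x) * (s ^ 2)⁻¹) := by
    funext y'
    rw [hF, hP, div_eq_mul_inv, div_eq_mul_inv]
  simp only [pdx, pdy]
  rw [egoalL, egoalR, hLHS.fderiv, hRHS.fderiv]
  simp only [ContinuousLinearMap.add_apply, ContinuousLinearMap.smul_apply,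
    ContinuousLinearMap.coe_comp', Function.comp_apply, ContinuousLinearMap.coe_sub',
    Pi.sub_apply, ContinuousLinearMap.smulRight_apply, ContinuousLinearMap.coe_smul',
    Pi.smul_apply, ContinuousLinearMap.coe_id', id_eq, map_sub, map_smul, smul_eq_mul,
    ContinuousLinearMap.neg_apply, ContinuousLinearMap.coe_neg', Pi.neg_apply,
    dotL_apply, dotp_single, pow_one]
  simp only [← hsdef, ← hudef]
  rw [← heuler2]
  clear_value s u
  field_simp
  ring
end
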